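/- arXiv:2112.06983 — 2 statements merged into one kernel-verified Lean document; each statement's English description precedes it below -/
import Mathlib

section
/- Let m, n ≥ 1 and let 1 ≤ r ≤ m. For every natural number s in the r-th chamber, i.e. (r−1)n ≤ s ≤ rn, the Gaussian polynomial coefficient is given by the truncated sum: P_m^n(s) = W_m(mn − s) + Σ_{i=r}^{m−1} (−1)^{m−i} Σ_{k=0}^{n i − s − s_{m−i}} W_i(k) · W_{m−i}(n i − s − s_{m−i} − k), where any inner sum whose upper limit is negative is empty (equals 0). -/
/-!
The generating function `G_{m,n}(q) = ∑ₛ P_m^n(s) qˢ` satisfies the Pascal recursion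
`G_{m+1,n+1} = G_{m,n+1} + q^{m+1} G_{m+1,n}`, hence `G_{m,n} · (q;q)_m = (q^{n+1};q)_m`.
As `∑ₜ W_j(t) qᵗ = 1 / (q;q)_j`, the products `W_i W_j` of these series obey a Pascal rule of
their own, and induction on `m` gives the expansion
`G_{m,n} = ∑_{i+j=m} (-1)^j q^{jn + s_j} W_i W_j`.
By the symmetry `P_m^n(s) = P_m^n(mn - s)`, the coefficient of `q^{mn-s}` yields the formula for
every `s ≤ mn`; in the `r`-th chamber the summands with `i < r` vanish, their convolution index
`ni - s - s_{m-i}` being negative.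
-/

open Finset

/-- `W t d` : the number of tuples `x` of nonnegative integers with `∑ i, d i * x i = t`. -/
noncomputable def W (t : ℤ) (d : List ℕ) : ℕ :=
  Nat.card {x : Fin d.length → ℕ // ∑ i, (d.get i : ℤ) * (x i : ℤ) = t}

/-- `Wm j t` : the restricted partition function `W(t, (1,2,…,j))`. -/
noncomputable def Wm (j : ℕ) (t : ℤ) : ℕ :=
  W t ((List.range j).map (· + 1))

/-- `P m n s` : the Gaussian polynomial coefficient, i.e. the number of tuples
`(x_1,…,x_m)` of nonnegative integers with `∑ i, i * x_i = s` and `∑ i, x_i ≤ n`. -/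
noncomputable def P (m n s : ℕ) : ℕ :=
  Nat.card {x : Fin m → ℕ // (∑ i : Fin m, ((i : ℕ) + 1) * x i = s) ∧ ∑ i, x i ≤ n}

/-- `tri j = j(j+1)/2`, the `j`-th triangular number. -/
def tri (j : ℕ) : ℕ := j * (j + 1) / 2

theorem finite_of_forall_le {N B : ℕ} {p : (Fin N → ℕ) → Prop}
    (h : ∀ x, p x → ∀ i, x i ≤ B) :
    Finite {x // p x} :=
  Finite.of_injective (fun x i => (⟨x.1 i, Nat.lt_succ_of_le (h x.1 x.2 i)⟩ : Fin (B + 1)))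
    fun _ _ hxy => Subtype.ext <| funext fun i => congrArg Fin.val (congrFun hxy i)

def snocSubtypeEquiv {N : ℕ} (p : (Fin (N + 1) → ℕ) → Prop) :
    {x // p x} ≃ {yc : (Fin N → ℕ) × ℕ // p (Fin.snoc yc.1 yc.2)} :=
  .symm <| ((Equiv.prodComm _ _).trans (Fin.snocEquiv fun _ => ℕ)).subtypeEquiv fun _ => Iff.rfl

def subtypeNatSplitEquiv {A : Type*} (q : A × ℕ → Prop) :
    {yc // q yc} ≃ {a // q (a, 0)} ⊕ {yc : A × ℕ // q (yc.1, yc.2 + 1)} where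
  toFun
    | ⟨(a, 0), h⟩ => .inl ⟨a, h⟩
    | ⟨(a, c + 1), h⟩ => .inr ⟨(a, c), h⟩
  invFun
    | .inl ⟨a, h⟩ => ⟨(a, 0), h⟩
    | .inr ⟨(a, c), h⟩ => ⟨(a, c + 1), h⟩
  left_inv := by rintro ⟨⟨a, _ | c⟩, h⟩ <;> rfl
  right_inv := by rintro (⟨a, h⟩ | ⟨⟨a, c⟩, h⟩) <;> rfl

theorem card_eq_card_zero_add_card_succ {A : Type*} (q : A × ℕ → Prop) [Finite {yc // q yc}] :
    Nat.card {yc // q yc} =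
      Nat.card {a // q (a, 0)} + Nat.card {yc : A × ℕ // q (yc.1, yc.2 + 1)} := by
  have := Finite.of_equiv _ (subtypeNatSplitEquiv q)
  have := Finite.sum_left (α := {a // q (a, 0)}) {yc : A × ℕ // q (yc.1, yc.2 + 1)}
  have := Finite.sum_right {a // q (a, 0)} (β := {yc : A × ℕ // q (yc.1, yc.2 + 1)})
  rw [Nat.card_congr (subtypeNatSplitEquiv q), Nat.card_sum]

theorem card_eq_card_snoc_zero_add_card_snoc_succ {N : ℕ} (p : (Fin (N + 1) → ℕ) → Prop)
    [Finite {x // p x}] :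
    Nat.card {x // p x} = Nat.card {y : Fin N → ℕ // p (Fin.snoc y 0)} +
      Nat.card {yc : (Fin N → ℕ) × ℕ // p (Fin.snoc yc.1 (yc.2 + 1))} := by
  have := Finite.of_equiv _ (snocSubtypeEquiv p)
  rw [Nat.card_congr (snocSubtypeEquiv p), card_eq_card_zero_add_card_succ]

theorem Wm_eq_card (j : ℕ) (t : ℤ) :
    Wm j t = Nat.card {x : Fin j → ℕ // ∑ i : Fin j, ((i : ℤ) + 1) * x i = t} := by
  have hlen : ((List.range j).map (· + 1)).length = j := by simp
  refine Nat.card_congr <| (Equiv.arrowCongr (finCongr hlen) (.refl ℕ)).subtypeEquiv fun x => ?_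
  rw [← Fin.sum_congr' _ hlen.symm]
  simp [Function.comp_def]

theorem sum_succ_mul_snoc {N : ℕ} (y : Fin N → ℕ) (c : ℕ) :
    ∑ i : Fin (N + 1), ((i : ℤ) + 1) * (Fin.snoc (α := fun _ => ℕ) y c i : ℕ) =
      ∑ i : Fin N, ((i : ℤ) + 1) * y i + (N + 1) * c := by
  simp [Fin.sum_univ_castSucc]

theorem sum_succ_mul_nonneg {j : ℕ} (x : Fin j → ℕ) :
    0 ≤ ∑ i : Fin j, ((i : ℤ) + 1) * x i :=
  Finset.sum_nonneg fun _ _ => by positivity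

instance finite_Wm (j : ℕ) (t : ℤ) :
    Finite {x : Fin j → ℕ // ∑ i : Fin j, ((i : ℤ) + 1) * x i = t} :=
  finite_of_forall_le (B := t.toNat) fun x hx i => by
    have : ((i : ℤ) + 1) * x i ≤ t :=
      hx ▸ Finset.single_le_sum (f := fun i : Fin j => ((i : ℤ) + 1) * x i)
        (fun _ _ => by positivity) (Finset.mem_univ i)
    nlinarith [Int.self_le_toNat t]

theorem Wm_of_neg {j : ℕ} {t : ℤ} (ht : t < 0) : Wm j t = 0 := by
  rw [Wm_eq_card, Nat.card_eq_zero]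
  exact .inl ⟨fun ⟨x, hx⟩ => by linarith [sum_succ_mul_nonneg x]⟩

theorem Wm_zero (t : ℤ) : Wm 0 t = if t = 0 then 1 else 0 := by
  rw [Wm_eq_card]
  split_ifs with ht <;> simp [ht, eq_comm]

theorem Wm_succ (j : ℕ) (t : ℤ) : Wm (j + 1) t = Wm j t + Wm (j + 1) (t - (j + 1)) := by
  rw [Wm_eq_card, card_eq_card_snoc_zero_add_card_snoc_succ, Wm_eq_card, Wm_eq_card,
    Nat.card_congr (snocSubtypeEquiv _)]
  simp only [sum_succ_mul_snoc]
  congr 1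
  · simp
  · congr! 3
    push_cast
    constructor <;> intro h <;> linarith

instance finite_P (m n s : ℕ) :
    Finite {x : Fin m → ℕ // (∑ i : Fin m, ((i : ℕ) + 1) * x i = s) ∧ ∑ i, x i ≤ n} :=
  finite_of_forall_le (B := n) fun _ hx i =>
    (Finset.single_le_sum (fun _ _ => Nat.zero_le _) (Finset.mem_univ i)).trans hx.2

theorem P_zero_left (n s : ℕ) : P 0 n s = if s = 0 then 1 else 0 := by
  unfold P
  split_ifs with hs <;> simp [hs, eq_comm]

theorem P_zero_right (m s : ℕ) : P m 0 s = if s = 0 then 1 else 0 := by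
  have hiff : ∀ x : Fin m → ℕ,
      ((∑ i : Fin m, ((i : ℕ) + 1) * x i = s) ∧ ∑ i, x i ≤ 0) ↔ x = 0 ∧ s = 0 := by
    intro x
    simp only [Nat.le_zero, Finset.sum_eq_zero_iff, Finset.mem_univ, true_imp_iff, funext_iff]
    constructor
    · rintro ⟨rfl, hx⟩
      simp [hx]
    · rintro ⟨hx, rfl⟩
      simp_all
  rw [P, Nat.card_congr (Equiv.subtypeEquivRight hiff)]
  split_ifs with hs <;> simp [hs]

theorem P_succ_succ (m n s : ℕ) :
    P (m + 1) (n + 1) s = P m (n + 1) s + if m + 1 ≤ s then P (m + 1) n (s - (m + 1)) else 0 := by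
  rw [P, card_eq_card_snoc_zero_add_card_snoc_succ]
  simp only [Fin.sum_univ_castSucc, Fin.snoc_castSucc, Fin.snoc_last, Fin.val_castSucc,
    Fin.val_last, mul_zero, add_zero]
  congr 1
  split_ifs with hs
  · rw [P, Nat.card_congr (snocSubtypeEquiv _)]
    simp only [Fin.sum_univ_castSucc, Fin.snoc_castSucc, Fin.snoc_last, Fin.val_castSucc,
      Fin.val_last, mul_add_one]
    congr! 3
    omega
  · rw [Nat.card_eq_zero]
    exact .inl ⟨fun ⟨_, h, _⟩ => by rw [mul_add_one] at h; omega⟩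

-- `x ↦ (n - ∑ x, x)`: the slack becomes a coordinate of weight `0`.
theorem P_eq_card_cons (m n s : ℕ) :
    P m n s =
      Nat.card {z : Fin (m + 1) → ℕ // ∑ i, z i = n ∧ ∑ i : Fin (m + 1), (i : ℕ) * z i = s} := by
  refine Nat.card_congr
    { toFun := fun x => ⟨Fin.cons (n - ∑ i, x.1 i) x.1, ?_⟩
      invFun := fun z => ⟨Fin.tail z.1, ?_⟩
      left_inv := fun x => by simp
      right_inv := fun z => Subtype.ext ?_ }
  · simpa [Fin.sum_univ_succ, Nat.sub_add_cancel x.2.2] using x.2.1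
  · have hn := z.2.1
    have hs := z.2.2
    simp only [Fin.sum_univ_succ, Fin.val_zero, Fin.val_succ, zero_mul, zero_add] at hn hs
    simp only [Fin.tail]
    exact ⟨hs, by omega⟩
  · have hn := z.2.1
    rw [Fin.sum_univ_succ] at hn
    simp [← hn, Fin.tail]

theorem sum_mul_rev_add_sum_mul {m : ℕ} (z : Fin (m + 1) → ℕ) :
    ∑ i : Fin (m + 1), (i : ℕ) * z i.rev + ∑ i : Fin (m + 1), (i : ℕ) * z i =
      m * ∑ i, z i := by
  rw [← Equiv.sum_comp Fin.revPerm, ← Finset.sum_add_distrib, Finset.mul_sum]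
  refine Finset.sum_congr rfl fun i _ => ?_
  rw [Fin.revPerm_apply, Fin.rev_rev, Fin.val_rev, ← add_mul]
  congr 1
  omega

theorem P_symm (m n s : ℕ) (hs : s ≤ m * n) : P m n (m * n - s) = P m n s := by
  rw [P_eq_card_cons, P_eq_card_cons]
  refine Nat.card_congr <| (Equiv.arrowCongr Fin.revPerm (.refl ℕ)).subtypeEquiv fun z => ?_
  have hrev := sum_mul_rev_add_sum_mul z
  simp only [Equiv.arrowCongr_apply, Fin.revPerm_symm, Equiv.coe_refl, Function.comp_apply, id,
    Fin.revPerm_apply]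
  rw [Fintype.sum_equiv Fin.revPerm (fun i => z i.rev) z (fun i => by simp)]
  constructor <;> rintro ⟨rfl, h⟩ <;> exact ⟨rfl, by omega⟩

theorem tri_succ (j : ℕ) : tri (j + 1) = tri j + (j + 1) := by
  have : (j + 1) * (j + 1 + 1) = j * (j + 1) + 2 * (j + 1) := by ring
  unfold tri
  omega

theorem tri_pos {j : ℕ} (hj : 0 < j) : 0 < tri j := by
  cases j with
  | zero => omega
  | succ j => rw [tri_succ]; omega

open PowerSeries

noncomputable def wSeries (j : ℕ) : PowerSeries ℤ := mk fun t => (Wm j t : ℤ)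

noncomputable def gaussSeries (m n : ℕ) : PowerSeries ℤ := mk fun s => (P m n s : ℤ)

/-- `qPoch n m` is the `q`-Pochhammer symbol `(X ^ (n + 1); X)_m`. -/
noncomputable def qPoch (n m : ℕ) : PowerSeries ℤ := ∏ a ∈ range m, (1 - X ^ (n + a + 1))

theorem qPoch_zero (n : ℕ) : qPoch n 0 = 1 := prod_range_zero _

theorem qPoch_succ (n m : ℕ) : qPoch n (m + 1) = qPoch n m * (1 - X ^ (n + m + 1)) :=
  prod_range_succ _ _

theorem qPoch_succ' (n m : ℕ) : qPoch n (m + 1) = qPoch (n + 1) m * (1 - X ^ (n + 1)) := by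
  simp only [qPoch, prod_range_succ', add_zero]
  congr! 4 with a
  ring

theorem wSeries_zero : wSeries 0 = 1 := by
  ext t
  simp [wSeries, Wm_zero, coeff_one]

theorem one_sub_X_pow_mul_wSeries_succ (j : ℕ) :
    (1 - X ^ (j + 1)) * wSeries (j + 1) = wSeries j := by
  ext t
  rw [sub_mul, one_mul, map_sub, coeff_X_pow_mul', wSeries, wSeries, coeff_mk, coeff_mk,
    Wm_succ]
  split_ifs with ht
  · rw [coeff_mk, Nat.cast_sub ht]
    push_cast
    ring
  · rw [Wm_of_neg (t := t - (j + 1)) (by omega)]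
    simp

theorem qPoch_zero_mul_wSeries (j : ℕ) : qPoch 0 j * wSeries j = 1 := by
  induction j with
  | zero => rw [qPoch_zero, wSeries_zero, one_mul]
  | succ j ih =>
    rw [qPoch_succ, mul_assoc, zero_add, one_sub_X_pow_mul_wSeries_succ, ih]

theorem gaussSeries_zero_left (n : ℕ) : gaussSeries 0 n = 1 := by
  ext s
  simp [gaussSeries, P_zero_left, coeff_one]

theorem gaussSeries_zero_right (m : ℕ) : gaussSeries m 0 = 1 := by
  ext s
  simp [gaussSeries, P_zero_right, coeff_one]

theorem gaussSeries_succ_succ (m n : ℕ) :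
    gaussSeries (m + 1) (n + 1) = gaussSeries m (n + 1) + X ^ (m + 1) * gaussSeries (m + 1) n := by
  ext s
  rw [map_add, coeff_X_pow_mul', gaussSeries, gaussSeries, gaussSeries, coeff_mk, coeff_mk,
    P_succ_succ]
  split_ifs <;> simp

theorem gaussSeries_mul_qPoch (m n : ℕ) : gaussSeries m n * qPoch 0 m = qPoch n m := by
  induction m generalizing n with
  | zero => rw [gaussSeries_zero_left, qPoch_zero, qPoch_zero, one_mul]
  | succ m ihm =>
    induction n with
    | zero => rw [gaussSeries_zero_right, one_mul]
    | succ n ihn =>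
      rw [gaussSeries_succ_succ, add_mul, mul_assoc, ihn, qPoch_succ, ← mul_assoc, ihm,
        qPoch_succ', qPoch_succ (n + 1)]
      ring

noncomputable def gaussExpansion (m n : ℕ) : PowerSeries ℤ :=
  ∑ p ∈ antidiagonal m, (-1) ^ p.2 * X ^ (p.2 * n + tri p.2) * (wSeries p.1 * wSeries p.2)

theorem gaussExpansion_succ_mul (m n : ℕ) :
    gaussExpansion (m + 1) n * (1 - X ^ (m + 1)) =
      (1 - X ^ (n + 1)) * gaussExpansion m (n + 1) := by
  have hsplit : ∀ p ∈ antidiagonal (m + 1),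
      (-1) ^ p.2 * X ^ (p.2 * n + tri p.2) * (wSeries p.1 * wSeries p.2) * (1 - X ^ (m + 1)) =
        (-1) ^ p.2 * X ^ (p.2 * n + tri p.2) * wSeries p.1 * ((1 - X ^ p.2) * wSeries p.2) +
        (-1) ^ p.2 * X ^ (p.2 * n + tri p.2) * X ^ p.2 * ((1 - X ^ p.1) * wSeries p.1) *
          wSeries p.2 := by
    intro p hp
    -- `1 - X^(i+j) = (1 - X^j) + X^j (1 - X^i)`; at the boundary `1 - X^0 = 0` kills the term
    rw [← mem_antidiagonal.mp hp, pow_add]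
    ring
  rw [gaussExpansion, sum_mul, sum_congr rfl hsplit, sum_add_distrib, Nat.sum_antidiagonal_succ',
    Nat.sum_antidiagonal_succ]
  simp only [pow_zero, sub_self, zero_mul, mul_zero, zero_add, one_sub_X_pow_mul_wSeries_succ]
  rw [gaussExpansion, mul_sum, ← sum_add_distrib]
  refine sum_congr rfl fun p _ => ?_
  rw [tri_succ]
  ring

theorem gaussExpansion_mul_qPoch (m n : ℕ) : gaussExpansion m n * qPoch 0 m = qPoch n m := by
  induction m generalizing n with
  | zero => simp [gaussExpansion, wSeries_zero, tri, qPoch_zero]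
  | succ m ih =>
    rw [qPoch_succ, zero_add, ← mul_assoc, mul_right_comm, gaussExpansion_succ_mul, mul_assoc, ih,
      qPoch_succ', mul_comm]

theorem gaussSeries_eq_gaussExpansion (m n : ℕ) : gaussSeries m n = gaussExpansion m n := by
  calc gaussSeries m n = gaussSeries m n * qPoch 0 m * wSeries m := by
        rw [mul_assoc, qPoch_zero_mul_wSeries, mul_one]
    _ = gaussExpansion m n * qPoch 0 m * wSeries m := by
        rw [gaussSeries_mul_qPoch, gaussExpansion_mul_qPoch]
    _ = gaussExpansion m n := by rw [mul_assoc, qPoch_zero_mul_wSeries, mul_one]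

noncomputable def wConv (a b : ℕ) (D : ℤ) : ℤ :=
  ∑ k ∈ range (D + 1).toNat, (Wm a k : ℤ) * Wm b (D - k)

theorem wConv_of_neg (a b : ℕ) {D : ℤ} (hD : D < 0) : wConv a b D = 0 := by
  rw [wConv, Int.toNat_of_nonpos (by omega), sum_range_zero]

theorem wConv_zero_right (a : ℕ) (D : ℤ) : wConv a 0 D = Wm a D := by
  rcases lt_or_ge D 0 with hD | hD
  · rw [wConv_of_neg a 0 hD, Wm_of_neg hD, Nat.cast_zero]
  · lift D to ℕ using hD
    simp [wConv, Wm_zero, sub_eq_zero]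

theorem coeff_X_pow_mul_wSeries_mul (a b e N : ℕ) :
    coeff N (X ^ e * (wSeries a * wSeries b)) = wConv a b (N - e) := by
  rw [coeff_X_pow_mul', wConv]
  split_ifs with h
  · rw [coeff_mul, Nat.sum_antidiagonal_eq_sum_range_succ_mk,
      show ((N : ℤ) - e + 1).toNat = N - e + 1 by omega]
    refine sum_congr rfl fun k hk => ?_
    rw [mem_range] at hk
    simp only [wSeries, coeff_mk]
    congr 3
    omega
  · rw [Int.toNat_of_nonpos (by omega), sum_range_zero]

theorem P_eq_sum_wConv (m n s : ℕ) (hs : s ≤ m * n) :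
    (P m n s : ℤ) =
      ∑ i ∈ range (m + 1), (-1) ^ (m - i) * wConv i (m - i) (n * i - s - tri (m - i)) := by
  rw [← P_symm m n s hs, ← coeff_mk (m * n - s) fun s => (P m n s : ℤ), ← gaussSeries,
    gaussSeries_eq_gaussExpansion, gaussExpansion, map_sum,
    Nat.sum_antidiagonal_eq_sum_range_succ_mk]
  refine sum_congr rfl fun i hi => ?_
  rw [mem_range] at hi
  rw [mul_assoc, show (-1 : PowerSeries ℤ) ^ (m - i) = C ((-1) ^ (m - i)) by simp, coeff_C_mul,
    coeff_X_pow_mul_wSeries_mul]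
  congr 2
  push_cast [Nat.cast_sub hs, Nat.cast_sub (Nat.lt_succ_iff.mp hi)]
  ring

theorem gaussian_chamber_formula_general (m n r s : ℕ) (hm : 1 ≤ m)
    (hrm : r ≤ m) (hs1 : (r - 1) * n ≤ s) (hs2 : s ≤ r * n) :
    (P m n s : ℤ) = (Wm m ((m : ℤ) * (n : ℤ) - (s : ℤ)) : ℤ) +
      ∑ i ∈ Finset.Icc r (m - 1), (-1 : ℤ) ^ (m - i) *
        ∑ k ∈ Finset.range
            (((n : ℤ) * (i : ℤ) - (s : ℤ) - (tri (m - i) : ℤ) + 1).toNat),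
          (Wm i (k : ℤ) : ℤ) *
            (Wm (m - i) ((n : ℤ) * (i : ℤ) - (s : ℤ) - (tri (m - i) : ℤ) - (k : ℤ)) : ℤ) := by
  have hs : s ≤ m * n := hs2.trans (Nat.mul_le_mul_right n hrm)
  rw [P_eq_sum_wConv m n s hs, sum_range_succ, add_comm]
  congr 1
  · simp [wConv_zero_right, tri, mul_comm]
  · refine (sum_subset (fun i hi => ?_) fun i hi hir => ?_).symm
    · simp only [mem_Icc, mem_range] at hi ⊢
      omega
    · simp only [mem_Icc, mem_range] at hi hir
      have hni : n * i ≤ s :=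
        le_trans (by rw [mul_comm]; exact Nat.mul_le_mul_right n (by omega)) hs1
      have htri : 0 < tri (m - i) := tri_pos (by omega)
      rw [wConv_of_neg _ _ (by omega), mul_zero]

/-- in the `r`-th chamber `(r−1)n ≤ s ≤ rn`, the Gaussian polynomial
coefficient is given by the truncated sum
`P_m^n(s) = W_m(mn−s) + Σ_{i=r}^{m−1} (−1)^{m−i}
Σ_{k=0}^{n i − s − s_{m−i}} W_i(k) W_{m−i}(n i − s − s_{m−i} − k)`. -/
theorem gaussian_chamber_formula (m n r s : ℕ) (hm : 1 ≤ m) (hn : 1 ≤ n)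
    (hr1 : 1 ≤ r) (hrm : r ≤ m) (hs1 : (r - 1) * n ≤ s) (hs2 : s ≤ r * n) :
    (P m n s : ℤ) = (Wm m ((m : ℤ) * (n : ℤ) - (s : ℤ)) : ℤ) +
      ∑ i ∈ Finset.Icc r (m - 1), (-1 : ℤ) ^ (m - i) *
        ∑ k ∈ Finset.range
            (((n : ℤ) * (i : ℤ) - (s : ℤ) - (tri (m - i) : ℤ) + 1).toNat),
          (Wm i (k : ℤ) : ℤ) *
            (Wm (m - i) ((n : ℤ) * (i : ℤ) - (s : ℤ) - (tri (m - i) : ℤ) - (k : ℤ)) : ℤ) :=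
  gaussian_chamber_formula_general m n r s hm hrm hs1 hs2
end

section
/- For every natural number s, the number of nonnegative integer solutions (x_1,…,x_5) of x_1 + x_2 + 2x_3 + 2x_4 + 3x_5 = s (i.e. W(s, (1,2)⧺(1,2,3))) satisfies, as an identity of real numbers: W(s, (1,1,2,2,3)) = (s⁴ + 18s³ + 112s² + 279s + 220)/288 + 37/1728 + ((2s+9)/64)·cos(πs) + (2/27)·cos(2πs/3). -/
open Finset

/-!
Write `∇ₐ f (t) = f t - f (t - a)` for functions on `ℤ`. Splitting the solutions of
`a x₀ + ∑ dᵢ xᵢ = t` according to whether `x₀ = 0` gives `∇ₐ W(·, a :: d) = W(·, d)`, so applying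
`∇_{d₁}, …, ∇_{dₖ}` to `W(·, d)` leaves the indicator of `t = 0`. Five differences kill the
quartic, `∇₂²` kills `(2t + 9) cos (π t)` and `∇₃` kills the 3-periodic term, so the right-hand side
`Q` satisfies `∇₁²∇₂²∇₃ Q = 0`. This operator determines `f t` from `f` on `[t - 9, t - 1]`, and
`Q` agrees with `W` on `[-8, 0]` (it vanishes at `-8, …, -1` and equals `1` at `0`), hence on all
`t ≥ -8`.
-/

open Real

def mulAddEqEquivSum {Y : Type*} (a : ℕ) (S : Y → ℤ) (t : ℤ) :
    {p : ℕ × Y // a * p.1 + S p.2 = t} ≃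
      {p : ℕ × Y // a * p.1 + S p.2 = t - a} ⊕ {y // S y = t} where
  toFun p :=
    if h : p.1.1 = 0 then .inr ⟨p.1.2, by simpa [h] using p.2⟩
    else .inl ⟨(p.1.1 - 1, p.1.2), by
      have := p.2; push_cast [Nat.one_le_iff_ne_zero.2 h]; linarith⟩
  invFun
    | .inl q => ⟨(q.1.1 + 1, q.1.2), by have := q.2; push_cast; linarith⟩
    | .inr y => ⟨(0, y.1), by simpa using y.2⟩
  left_inv := by
    rintro ⟨⟨k, y⟩, _⟩
    rcases k with _ | k <;> simp
  right_inv := by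
    rintro (⟨⟨k, y⟩, _⟩ | ⟨y, _⟩) <;> simp

theorem finite_solutions {d : List ℕ} (hd : ∀ a ∈ d, 0 < a) (t : ℤ) :
    Finite {x : Fin d.length → ℕ // ∑ i, (d.get i : ℤ) * (x i : ℤ) = t} := by
  refine Set.Finite.subset (Set.Finite.pi (t := fun _ => Set.Iic t.toNat)
    (fun _ => Set.finite_Iic _)) ?_
  intro x (hx : _ = t) i _
  have hpos : 1 ≤ (d.get i : ℤ) := by exact_mod_cast hd _ (List.get_mem d i)
  have := Finset.single_le_sum (f := fun j => (d.get j : ℤ) * (x j : ℤ))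
    (fun j _ => by positivity) (Finset.mem_univ i)
  simp only [Set.mem_Iic]
  nlinarith [Int.self_le_toNat t]

theorem W_cons {a : ℕ} {d : List ℕ} (hd : ∀ b ∈ a :: d, 0 < b) (t : ℤ) :
    W t (a :: d) = W (t - a) (a :: d) + W t d := by
  have := finite_solutions hd (t - a)
  have := finite_solutions (fun b hb => hd b (List.mem_cons_of_mem a hb)) t
  unfold W
  rw [← Nat.card_sum]
  let e (s : ℤ) : {x : Fin (a :: d).length → ℕ // ∑ i, ((a :: d).get i : ℤ) * (x i : ℤ) = s} ≃
      {p : ℕ × (Fin d.length → ℕ) // a * p.1 + ∑ i, (d.get i : ℤ) * (p.2 i : ℤ) = s} :=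
    (Fin.consEquiv fun _ => ℕ).symm.subtypeEquiv fun x => by
      simp [Fin.sum_univ_succ, Fin.consEquiv, Fin.tail]
  exact Nat.card_congr <| (e t).trans <|
    (mulAddEqEquivSum a (fun y : Fin d.length → ℕ => ∑ i, (d.get i : ℤ) * (y i : ℤ)) t).trans <|
      (e (t - a)).symm.sumCongr (Equiv.refl _)

theorem W_nil (t : ℤ) : W t [] = if t = 0 then 1 else 0 := by
  split_ifs with ht <;> simp [W, ht, eq_comm]

theorem W_of_neg {t : ℤ} (ht : t < 0) (d : List ℕ) : W t d = 0 := by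
  refine Nat.card_eq_zero.2 (.inl ⟨fun ⟨x, hx⟩ => ?_⟩)
  have : 0 ≤ ∑ i, (d.get i : ℤ) * (x i : ℤ) := by positivity
  omega

section BwdDiff

variable {G : Type*} [AddCommGroup G]

def bwdDiff (a : ℤ) : (ℤ → G) →+ (ℤ → G) :=
  AddMonoidHom.mk' (fun f t => f t - f (t - a)) fun f g => by ext; simp; abel

@[simp] theorem bwdDiff_apply (a : ℤ) (f : ℤ → G) (t : ℤ) :
    bwdDiff a f t = f t - f (t - a) := rfl

def bwdDiffs : List ℕ → (ℤ → G) →+ (ℤ → G)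
  | [] => AddMonoidHom.id _
  | a :: d => (bwdDiffs d).comp (bwdDiff a)

@[simp] theorem bwdDiffs_nil (f : ℤ → G) : bwdDiffs [] f = f := rfl

@[simp] theorem bwdDiffs_cons (a : ℕ) (d : List ℕ) (f : ℤ → G) :
    bwdDiffs (a :: d) f = bwdDiffs d (bwdDiff a f) := rfl

theorem bwdDiff_comm (a b : ℤ) (f : ℤ → G) :
    bwdDiff a (bwdDiff b f) = bwdDiff b (bwdDiff a f) := by
  ext t; simp [sub_sub, add_comm]; abel

theorem bwdDiffs_perm {d d' : List ℕ} (h : d.Perm d') :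
    (bwdDiffs d : (ℤ → G) →+ (ℤ → G)) = bwdDiffs d' := by
  induction h with
  | nil => rfl
  | cons a _ ih => ext f : 1; simp [ih]
  | swap a b d => ext f : 1; simp [bwdDiff_comm]
  | trans _ _ ih₁ ih₂ => exact ih₁.trans ih₂

theorem bwdDiff_eq_zero_of_periodic {a : ℤ} {f : ℤ → G} (hf : Function.Periodic f a) :
    bwdDiff a f = 0 := by
  ext t; simp [hf.sub_eq]

theorem bwdDiffs_apply_eq_self {d : List ℕ} (hd : ∀ a ∈ d, 0 < a) {f : ℤ → G} {t : ℤ}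
    (hf : ∀ s, t - d.sum ≤ s → s < t → f s = 0) : bwdDiffs d f t = f t := by
  induction d generalizing f with
  | nil => rfl
  | cons a d ih =>
    have ha : 0 < a := hd a List.mem_cons_self
    simp only [List.sum_cons, Nat.cast_add] at hf
    rw [bwdDiffs_cons, ih (fun b hb => hd b (List.mem_cons_of_mem a hb)), bwdDiff_apply,
      hf (t - a) (by omega) (by omega), sub_zero]
    intro s hs hst
    rw [bwdDiff_apply, hf s (by omega) hst, hf (s - a) (by omega) (by omega), sub_zero]

theorem eq_of_bwdDiffs_eq {d : List ℕ} (hd : ∀ a ∈ d, 0 < a) {f g : ℤ → G} {m : ℤ}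
    (hdiff : ∀ t, m ≤ t → bwdDiffs d f t = bwdDiffs d g t)
    (hinit : ∀ t, m - d.sum ≤ t → t < m → f t = g t) {t : ℤ} (ht : m - d.sum ≤ t) :
    f t = g t := by
  rw [← sub_eq_zero, ← Pi.sub_apply]
  induction t using Int.strongRec (m := m) with
  | lt t htm => exact sub_eq_zero.2 (hinit t ht htm)
  | ge t htm ih =>
    rw [← bwdDiffs_apply_eq_self hd (fun s hs hst => ih s hst (by omega)), map_sub,
      Pi.sub_apply, hdiff t htm, sub_self]

end BwdDiff

theorem bwdDiffs_W {R : Type*} [AddCommGroupWithOne R] {d : List ℕ} (hd : ∀ a ∈ d, 0 < a) :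
    bwdDiffs d (fun t => (W t d : R)) = fun t => if t = 0 then 1 else 0 := by
  induction d with
  | nil => ext t; by_cases ht : t = 0 <;> simp [W_nil, ht]
  | cons a d ih =>
    rw [bwdDiffs_cons, ← ih fun b hb => hd b (List.mem_cons_of_mem a hb)]
    congr 1
    ext t
    simp [W_cons hd t]

theorem W_zero {d : List ℕ} (hd : ∀ a ∈ d, 0 < a) : W 0 d = 1 := by
  have h := bwdDiffs_apply_eq_self hd (f := fun t => (W t d : ℤ)) (t := 0)
    fun s _ hs => by simp [W_of_neg hs]
  rw [bwdDiffs_W hd] at h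
  simpa using h.symm

theorem cos_two_pi_mul_intCast_div_three (n : ℤ) :
    cos (2 * π * n / 3) = if 3 ∣ n then 1 else -1 / 2 := by
  obtain ⟨r, q, hr, hr3, rfl⟩ : ∃ r q : ℤ, 0 ≤ r ∧ r < 3 ∧ n = r + 3 * q :=
    ⟨n % 3, n / 3, Int.emod_nonneg n (by norm_num), Int.emod_lt_of_pos n (by norm_num),
      (Int.emod_add_mul_ediv n 3).symm⟩
  rw [show 2 * π * ((r + 3 * q : ℤ) : ℝ) / 3 = 2 * π * r / 3 + q * (2 * π) by push_cast; ring,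
    cos_add_int_mul_two_pi]
  simp only [Int.dvd_add_left (dvd_mul_right 3 q)]
  interval_cases r
  · simp
  · rw [show 2 * π * ((1 : ℤ) : ℝ) / 3 = π - π / 3 by push_cast; ring, cos_pi_sub,
      cos_pi_div_three]
    norm_num
  · rw [show 2 * π * ((2 : ℤ) : ℝ) / 3 = π / 3 + π by push_cast; ring, cos_add_pi,
      cos_pi_div_three]
    norm_num

noncomputable def polyPart (t : ℤ) : ℝ :=
  ((t : ℝ) ^ 4 + 18 * (t : ℝ) ^ 3 + 112 * (t : ℝ) ^ 2 + 279 * (t : ℝ) + 220) / 288 + 37 / 1728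

noncomputable def alternatingPart (t : ℤ) : ℝ := ((2 * (t : ℝ) + 9) / 64) * cos (π * t)

noncomputable def period3Part (t : ℤ) : ℝ := (2 / 27) * cos (2 * π * t / 3)

theorem bwdDiffs_polyPart : bwdDiffs [1, 2, 1, 2, 3] polyPart = 0 := by
  ext t
  simp only [bwdDiffs_cons, bwdDiffs_nil, bwdDiff_apply, polyPart, Pi.zero_apply]
  push_cast
  ring

theorem bwdDiff_two_alternatingPart :
    bwdDiff 2 alternatingPart = fun t : ℤ => cos (π * t) / 16 := by
  ext t
  rw [bwdDiff_apply, alternatingPart, alternatingPart, Int.cast_sub, Int.cast_two,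
    show π * (t - 2) = π * t - 2 * π by ring, cos_sub_two_pi]
  ring

theorem bwdDiffs_alternatingPart : bwdDiffs [1, 2, 1, 2, 3] alternatingPart = 0 := by
  have hper : Function.Periodic (fun t : ℤ => cos (π * t) / 16) 2 := fun t => by
    dsimp only
    rw [Int.cast_add, Int.cast_two, show π * (t + 2) = π * t + 2 * π by ring, cos_add_two_pi]
  rw [bwdDiffs_perm (show [1, 2, 1, 2, 3].Perm [2, 2, 1, 1, 3] by decide), bwdDiffs_cons,
    bwdDiffs_cons, Nat.cast_two, bwdDiff_two_alternatingPart, bwdDiff_eq_zero_of_periodic hper,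
    map_zero]

theorem bwdDiffs_period3Part : bwdDiffs [1, 2, 1, 2, 3] period3Part = 0 := by
  have hper : Function.Periodic period3Part 3 := fun t => by
    rw [period3Part, period3Part, Int.cast_add, Int.cast_three,
      show 2 * π * (t + 3) / 3 = 2 * π * t / 3 + 2 * π by ring, cos_add_two_pi]
  rw [bwdDiffs_perm (show [1, 2, 1, 2, 3].Perm [3, 1, 2, 1, 2] by decide), bwdDiffs_cons,
    Nat.cast_ofNat, bwdDiff_eq_zero_of_periodic hper, map_zero]

theorem bwdDiffs_quasipolynomial :
    bwdDiffs [1, 2, 1, 2, 3] (polyPart + alternatingPart + period3Part) = 0 := by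
  rw [map_add, map_add, bwdDiffs_polyPart, bwdDiffs_alternatingPart, bwdDiffs_period3Part,
    add_zero, add_zero]

theorem W_eq_quasipolynomial_of_le_zero {t : ℤ} (ht : -8 ≤ t) (ht' : t ≤ 0) :
    (W t [1, 2, 1, 2, 3] : ℝ) = (polyPart + alternatingPart + period3Part) t := by
  simp only [Pi.add_apply, polyPart, alternatingPart, period3Part, mul_comm π (t : ℝ),
    cos_int_mul_pi, cos_two_pi_mul_intCast_div_three]
  interval_cases t <;> norm_num [W_of_neg, W_zero]

/-- explicit quasipolynomial expression for
`W(s, (1,2) ⧺ (1,2,3)) = W(s,(1,1,2,2,3))`. -/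
theorem W_d2_d3_explicit (s : ℕ) :
    (W (s : ℤ) ([1, 2] ++ [1, 2, 3]) : ℝ) =
      ((s : ℝ) ^ 4 + 18 * (s : ℝ) ^ 3 + 112 * (s : ℝ) ^ 2 + 279 * (s : ℝ) + 220) / 288
        + 37 / 1728
        + ((2 * (s : ℝ) + 9) / 64) * Real.cos (Real.pi * s)
        + (2 / 27) * Real.cos (2 * Real.pi * s / 3) := by
  have hd : ∀ a ∈ [1, 2, 1, 2, 3], 0 < a := by decide
  have hdiff (t : ℤ) (ht : 1 ≤ t) :
      bwdDiffs [1, 2, 1, 2, 3] (fun t => (W t [1, 2, 1, 2, 3] : ℝ)) t =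
        bwdDiffs [1, 2, 1, 2, 3] (polyPart + alternatingPart + period3Part) t := by
    rw [bwdDiffs_W hd, bwdDiffs_quasipolynomial]
    exact if_neg (by omega)
  have h := eq_of_bwdDiffs_eq hd hdiff (fun t ht ht' =>
    W_eq_quasipolynomial_of_le_zero (by simpa using ht) (Int.lt_add_one_iff.1 ht')) (t := s)
    (by simp)
  simpa [polyPart, alternatingPart, period3Part] using h
end
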